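/- arXiv:1702.05910 — 3 statements merged into one kernel-verified Lean document; each statement's English description precedes it below -/
import Mathlib

section
/- Let X_1, X_2, ... be i.i.d. real random variables with continuous cdf F, let 0 < p < 1, and suppose F is differentiable in a neighborhood of x_p = F^{-1}(p) with density f that is positive, finite and continuous at x_p. Let U_{i:n} denote order statistics of i.i.d. Uniform(0,1) random variables and Δ_{k+j,n} = U_{k+j+1:n} − U_{k+j:n}. If k = k_n satisfies k_n/n → p, then for every fixed integer j, the ratio (F^{-1}(U_{k+j:n} + Δ_{k+j,n}) − F^{-1}(U_{k+j:n})) / Δ_{k+j,n} converges almost surely to 1/f(x_p) as n → ∞. -/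
open MeasureTheory ProbabilityTheory Filter Topology Set

/-- The `k`-th order statistic (1-indexed, i.e. the `k`-th smallest value) among the
first `n` random variables `X 0, ..., X (n-1)`. -/
noncomputable def orderStat {Ω : Type*} (n k : ℕ) (X : ℕ → Ω → ℝ) (ω : Ω) : ℝ :=
  (List.insertionSort (· ≤ ·) (List.map (fun i => X i ω) (List.range n))).getD (k - 1) 0

/-- The quantile function `F⁻¹(p) = inf {x | F x ≥ p}`. -/
noncomputable def quantileFn (F : ℝ → ℝ) (p : ℝ) : ℝ := sInf {x | p ≤ F x}

/-- The standard exponential distribution (rate 1) on `ℝ`. -/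
noncomputable def stdExp : Measure ℝ := expMeasure 1

instance : IsProbabilityMeasure stdExp := isProbabilityMeasure_expMeasure one_pos

/-- Convergence in distribution: weak convergence of the laws of `V n` under `P`
to the limit law `ν`, tested against bounded continuous functions. -/
def TendstoInDistribution {Ω E : Type*} [MeasurableSpace Ω] [MeasurableSpace E]
    [TopologicalSpace E] (P : Measure Ω) (V : ℕ → Ω → E) (ν : Measure E) : Prop :=
  ∀ g : BoundedContinuousFunction E ℝ,
    Tendsto (fun n => ∫ ω, g (V n ω) ∂P) atTop (𝓝 (∫ x, g x ∂ν))


noncomputable def cntLe {Ω : Type*} (n : ℕ) (U : ℕ → Ω → ℝ) (ω : Ω) (c : ℝ) : ℕ :=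
  ((List.range n).map (fun i => U i ω)).countP (fun x => decide (x ≤ c))


lemma sorted_getD_le_iff {l : List ℝ} (hl : l.Pairwise (· ≤ ·)) {m : ℕ}
    (hm1 : 1 ≤ m) (hmn : m ≤ l.length) (c : ℝ) :
    l.getD (m-1) 0 ≤ c ↔ m ≤ l.countP (fun x => decide (x ≤ c)) := by
  have hlt : m - 1 < l.length := by omega
  rw [List.getD_eq_getElem l 0 hlt]
  constructor
  · intro h
    have htake : ∀ x ∈ l.take m, (fun x => decide (x ≤ c)) x = true := by
      intro x hx
      obtain ⟨i, hi, rfl⟩ := List.getElem_of_mem hx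
      rw [List.length_take] at hi
      rw [List.getElem_take]
      simp only [decide_eq_true_eq]
      have hle : l[i] ≤ l[m-1] := by
        rcases eq_or_lt_of_le (show i ≤ m - 1 by omega) with h' | h'
        · subst h'; exact le_refl _
        · exact hl.rel_get_of_lt (a := ⟨i, by omega⟩) (b := ⟨m-1, hlt⟩) h'
      exact hle.trans h
    calc m = (l.take m).length := by rw [List.length_take]; omega
    _ = (l.take m).countP (fun x => decide (x ≤ c)) := (List.countP_eq_length.mpr htake).symm
    _ ≤ l.countP (fun x => decide (x ≤ c)) := by
        conv_rhs => rw [← List.take_append_drop m l]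
        rw [List.countP_append]; omega
  · intro h
    by_contra hc
    push_neg at hc
    have hdrop : ∀ x ∈ l.drop (m-1), ¬ ((fun x => decide (x ≤ c)) x = true) := by
      intro x hx
      obtain ⟨i, hi, rfl⟩ := List.getElem_of_mem hx
      rw [List.getElem_drop]
      simp only [decide_eq_true_eq, not_le]
      refine lt_of_lt_of_le hc ?_
      rcases Nat.eq_zero_or_pos i with rfl | hipos
      · simp
      · exact hl.rel_get_of_lt (a := ⟨m-1, hlt⟩) (b := ⟨m-1+i, by rw [List.length_drop] at hi; omega⟩)
          (by simp [Fin.lt_def]; omega)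
    have h2 : l.countP (fun x => decide (x ≤ c)) ≤ m - 1 := by
      conv_lhs => rw [← List.take_append_drop (m-1) l]
      rw [List.countP_append]
      have : (l.drop (m-1)).countP (fun x => decide (x ≤ c)) = 0 := by
        rw [List.countP_eq_zero]; exact hdrop
      have h3 : (l.take (m-1)).countP (fun x => decide (x ≤ c)) ≤ (l.take (m-1)).length :=
        List.countP_le_length
      rw [List.length_take] at h3
      omega
    omega

section OS
variable {Ω : Type*} {U : ℕ → Ω → ℝ} {ω : Ω} {n m : ℕ} {c : ℝ}

lemma sortedList_facts (n : ℕ) (U : ℕ → Ω → ℝ) (ω : Ω) :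
    (List.insertionSort (· ≤ ·) (List.map (fun i => U i ω) (List.range n))).Pairwise (· ≤ ·) ∧
    (List.insertionSort (· ≤ ·) (List.map (fun i => U i ω) (List.range n))).length = n := by
  constructor
  · exact List.pairwise_insertionSort _ _
  · rw [(List.perm_insertionSort _ _).length_eq, List.length_map, List.length_range]

lemma orderStat_le_iff (h1 : 1 ≤ m) (h2 : m ≤ n) :
    orderStat n m U ω ≤ c ↔ m ≤ cntLe n U ω c := by
  obtain ⟨hs, hlen⟩ := sortedList_facts n U ω
  rw [orderStat, sorted_getD_le_iff hs h1 (by rw [hlen]; exact h2), cntLe,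
    (List.perm_insertionSort _ _).countP_eq]

lemma orderStat_lt_succ (hd : ∀ i j : ℕ, i ≠ j → U i ω ≠ U j ω)
    (h1 : 1 ≤ m) (h2 : m + 1 ≤ n) :
    orderStat n m U ω < orderStat n (m+1) U ω := by
  obtain ⟨hs, hlen⟩ := sortedList_facts n U ω
  set l := List.insertionSort (· ≤ ·) (List.map (fun i => U i ω) (List.range n)) with hl
  have hnd : l.Nodup := by
    refine (List.perm_insertionSort _ _).nodup_iff.mpr ?_
    refine List.Nodup.map_on ?_ List.nodup_range
    intro x hx y hy hxy
    by_contra hne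
    exact hd x y hne hxy
  have hlt1 : m - 1 < l.length := by omega
  have hlt2 : m + 1 - 1 < l.length := by omega
  rw [orderStat, orderStat, ← hl, List.getD_eq_getElem l 0 hlt1, List.getD_eq_getElem l 0 hlt2]
  have hle : l[m-1] ≤ l[m+1-1] := hs.rel_get_of_lt (a := ⟨m-1, hlt1⟩) (b := ⟨m+1-1, hlt2⟩)
    (by simp [Fin.lt_def]; omega)
  refine lt_of_le_of_ne hle ?_
  intro heq
  have := (List.Nodup.getElem_inj_iff hnd).mp heq
  omega

lemma cntLe_cast_eq_sum :
    ((cntLe n U ω c : ℝ)) = ∑ i ∈ Finset.range n, (if U i ω ≤ c then (1:ℝ) else 0) := by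
  rw [cntLe, List.countP_map]
  induction n with
  | zero => simp
  | succ n ih =>
    rw [List.range_succ, List.countP_append, Finset.sum_range_succ, ← ih]
    simp [Function.comp]
end OS

section Q
variable {F : ℝ → ℝ}

lemma F_quantile_eq (hmono : Monotone F) (hcont : Continuous F)
    (hbot : Tendsto F atBot (𝓝 0)) (htop : Tendsto F atTop (𝓝 1))
    {q : ℝ} (h0 : 0 < q) (h1 : q < 1) : F (quantileFn F q) = q := by
  obtain ⟨b, hb⟩ := (htop.eventually_const_lt h1).exists
  obtain ⟨a, ha⟩ := (hbot.eventually_lt_const h0).exists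
  have hne : {x | q ≤ F x}.Nonempty := ⟨b, le_of_lt hb⟩
  have hbdd : BddBelow {x | q ≤ F x} := by
    refine ⟨a, fun x hx => ?_⟩
    by_contra hc
    push_neg at hc
    exact absurd (le_trans hx (hmono hc.le)) (not_le.mpr ha)
  have hclosed : IsClosed {x | q ≤ F x} := isClosed_Ici.preimage hcont
  have hmem : q ≤ F (quantileFn F q) := hclosed.csInf_mem hne hbdd
  refine le_antisymm ?_ hmem
  by_contra hgt
  push_neg at hgt
  have hev : ∀ᶠ x in 𝓝 (quantileFn F q), q < F x :=
    (hcont.continuousAt).eventually_const_lt hgt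
  obtain ⟨ε, hε, hball⟩ := Metric.eventually_nhds_iff.mp hev
  have hy : q < F (quantileFn F q - ε/2) := by
    refine hball ?_
    rw [Real.dist_eq]
    rw [abs_of_nonpos (by linarith)]
    linarith
  have h5 : quantileFn F q ≤ quantileFn F q - ε/2 := csInf_le hbdd (le_of_lt hy)
  linarith

lemma quantile_hasDeriv (hmono : Monotone F) (hcont : Continuous F)
    (hbot : Tendsto F atBot (𝓝 0)) (htop : Tendsto F atTop (𝓝 1))
    {p : ℝ} {f : ℝ → ℝ} (hp0 : 0 < p) (hp1 : p < 1)
    (hderiv : ∀ᶠ x in 𝓝 (quantileFn F p), HasDerivAt F (f x) x)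
    (hfcont : ContinuousAt f (quantileFn F p)) (hfpos : 0 < f (quantileFn F p)) :
    ∀ᶠ q in 𝓝 p, HasDerivAt (quantileFn F) (f (quantileFn F q))⁻¹ q := by
  set G := quantileFn F with hG
  set xp := G p with hxp
  obtain ⟨r, hr, hball⟩ := Metric.eventually_nhds_iff.mp
    (hderiv.and (hfcont.eventually_const_lt hfpos))
  set a := xp - r/2 with ha
  set b := xp + r/2 with hb
  have hIccball : ∀ x ∈ Icc a b, dist x xp < r := by
    intro x hx
    rw [Real.dist_eq, abs_lt]
    obtain ⟨h1, h2⟩ := hx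
    constructor <;> [skip; skip] <;> simp only [ha, hb] at h1 h2 <;> linarith
  have hsm : StrictMonoOn F (Icc a b) := by
    refine strictMonoOn_of_deriv_pos (convex_Icc a b) hcont.continuousOn ?_
    intro x hx
    rw [interior_Icc] at hx
    have hxb : dist x xp < r := hIccball x (Ioo_subset_Icc_self hx)
    rw [(hball hxb).1.deriv]
    exact (hball hxb).2
  have hFxp : F xp = p := F_quantile_eq hmono hcont hbot htop hp0 hp1
  have haxp : a < xp := by simp only [ha]; linarith
  have hxpb : xp < b := by simp only [hb]; linarith
  have hFa : F a < p := hFxp ▸ hsm ⟨le_refl a, by linarith⟩ ⟨haxp.le, hxpb.le⟩ haxp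
  have hFb : p < F b := hFxp ▸ hsm ⟨haxp.le, hxpb.le⟩ ⟨by linarith, le_refl b⟩ hxpb
  have hFa0 : 0 ≤ F a := le_of_tendsto hbot (eventually_atBot.2 ⟨a, fun x hx => hmono hx⟩)
  have hFb1 : F b ≤ 1 := ge_of_tendsto htop (eventually_atTop.2 ⟨b, fun x hx => hmono hx⟩)
  -- key: for q in Ioo (F a) (F b), G q ∈ Ioo a b and F (G q) = q
  have key : ∀ q ∈ Ioo (F a) (F b), G q ∈ Ioo a b ∧ F (G q) = q := by
    intro q hq
    have hq0 : 0 < q := lt_of_le_of_lt hFa0 hq.1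
    have hq1 : q < 1 := lt_of_lt_of_le hq.2 hFb1
    have hFGq : F (G q) = q := F_quantile_eq hmono hcont hbot htop hq0 hq1
    refine ⟨⟨?_, ?_⟩, hFGq⟩
    · by_contra hc
      push_neg at hc
      have := hmono hc
      rw [hFGq] at this
      exact absurd (lt_of_le_of_lt this hq.1) (lt_irrefl q)
    · by_contra hc
      push_neg at hc
      have := hmono hc
      rw [hFGq] at this
      exact absurd hq.2 (not_lt.mpr this)
  -- continuity of G on Ioo (F a) (F b)
  have hGcont : ∀ q₀ ∈ Ioo (F a) (F b), ContinuousAt G q₀ := by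
    intro q₀ hq₀
    obtain ⟨hx₀mem, hFx₀⟩ := key q₀ hq₀
    set x₀ := G q₀ with hx₀
    rw [Metric.continuousAt_iff]
    intro ε hε
    set ε' := min (ε/2) (min (x₀ - a) (b - x₀)) with hε'
    have hε'pos : 0 < ε' := by
      refine lt_min (by linarith) (lt_min ?_ ?_)
      · exact sub_pos.mpr hx₀mem.1
      · exact sub_pos.mpr hx₀mem.2
    have h1 : a ≤ x₀ - ε' := by
      have : ε' ≤ x₀ - a := le_trans (min_le_right _ _) (min_le_left _ _)
      linarith
    have h2 : x₀ + ε' ≤ b := by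
      have : ε' ≤ b - x₀ := le_trans (min_le_right _ _) (min_le_right _ _)
      linarith
    have hax₀ : a ≤ x₀ := hx₀mem.1.le
    have hx₀b : x₀ ≤ b := hx₀mem.2.le
    have hlo : F (x₀ - ε') < q₀ := by
      have h := hsm (show x₀ - ε' ∈ Icc a b from ⟨h1, by linarith⟩)
        (show x₀ ∈ Icc a b from ⟨hax₀, hx₀b⟩) (by linarith)
      rwa [hFx₀] at h
    have hhi : q₀ < F (x₀ + ε') := by
      have h := hsm (show x₀ ∈ Icc a b from ⟨hax₀, hx₀b⟩)
        (show x₀ + ε' ∈ Icc a b from ⟨by linarith, h2⟩) (by linarith)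
      rwa [hFx₀] at h
    refine ⟨min (q₀ - F (x₀ - ε')) (F (x₀ + ε') - q₀), lt_min (by linarith) (by linarith), ?_⟩
    intro q hq
    rw [Real.dist_eq, abs_lt] at hq
    have hq1 : F (x₀ - ε') < q := by
      have := hq.1
      have h3 : min (q₀ - F (x₀ - ε')) (F (x₀ + ε') - q₀) ≤ q₀ - F (x₀ - ε') := min_le_left _ _
      linarith
    have hq2 : q < F (x₀ + ε') := by
      have := hq.2
      have h3 : min (q₀ - F (x₀ - ε')) (F (x₀ + ε') - q₀) ≤ F (x₀ + ε') - q₀ := min_le_right _ _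
      linarith
    have hqIoo : q ∈ Ioo (F a) (F b) := by
      constructor
      · exact lt_of_le_of_lt (hmono (by linarith : a ≤ x₀ - ε')) hq1
      · exact lt_of_lt_of_le hq2 (hmono (by linarith : x₀ + ε' ≤ b))
    obtain ⟨hGqmem, hFGq⟩ := key q hqIoo
    have hGlo : x₀ - ε' < G q := by
      by_contra hc
      push_neg at hc
      have := hmono hc
      rw [hFGq] at this
      linarith
    have hGhi : G q < x₀ + ε' := by
      by_contra hc
      push_neg at hc
      have := hmono hc
      rw [hFGq] at this
      linarith
    rw [Real.dist_eq, abs_lt]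
    have : ε' ≤ ε/2 := min_le_left _ _
    constructor <;> linarith
  -- conclusion
  have hmemIoo : Ioo (F a) (F b) ∈ 𝓝 p := isOpen_Ioo.mem_nhds ⟨hFa, hFb⟩
  filter_upwards [hmemIoo] with q hq
  obtain ⟨hGqmem, hFGq⟩ := key q hq
  have hballmem : dist (G q) xp < r := hIccball _ (Ioo_subset_Icc_self hGqmem)
  refine HasDerivAt.of_local_left_inverse (hGcont q hq) (hball hballmem).1
    (ne_of_gt (hball hballmem).2) ?_
  filter_upwards [isOpen_Ioo.eventually_mem hq] with y hy
  exact (key y hy).2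

lemma slope_tendsto {G φ : ℝ → ℝ} {p : ℝ} (hG : ∀ᶠ q in 𝓝 p, HasDerivAt G (φ q) q)
    (hφ : ContinuousAt φ p) {u v : ℕ → ℝ} (hu : Tendsto u atTop (𝓝 p))
    (hv : Tendsto v atTop (𝓝 p)) (huv : ∀ᶠ n in atTop, u n < v n) :
    Tendsto (fun n => (G (v n) - G (u n)) / (v n - u n)) atTop (𝓝 (φ p)) := by
  rw [Metric.tendsto_atTop]
  intro ε hε
  have hεball : ∀ᶠ q in 𝓝 p, dist (φ q) (φ p) < ε := hφ (Metric.ball_mem_nhds (φ p) hε)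
  obtain ⟨δ, hδ, hδsub⟩ := Metric.eventually_nhds_iff.mp (hG.and hεball)
  have hunear := hu (Metric.ball_mem_nhds p hδ)
  have hvnear := hv (Metric.ball_mem_nhds p hδ)
  rw [mem_map, mem_atTop_sets] at hunear hvnear
  obtain ⟨N₁, hN₁⟩ := hunear
  obtain ⟨N₂, hN₂⟩ := hvnear
  rw [eventually_atTop] at huv
  obtain ⟨N₃, hN₃⟩ := huv
  refine ⟨max N₁ (max N₂ N₃), fun n hn => ?_⟩
  have hn1 : N₁ ≤ n := le_trans (le_max_left _ _) hn
  have hn2 : N₂ ≤ n := le_trans (le_max_left _ _) (le_trans (le_max_right _ _) hn)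
  have hn3 : N₃ ≤ n := le_trans (le_max_right _ _) (le_trans (le_max_right _ _) hn)
  have hu' : dist (u n) p < δ := hN₁ n hn1
  have hv' : dist (v n) p < δ := hN₂ n hn2
  have hlt : u n < v n := hN₃ n hn3
  rw [Real.dist_eq, abs_lt] at hu' hv'
  have hsub : ∀ x ∈ Icc (u n) (v n), dist x p < δ := by
    intro x hx
    rw [Real.dist_eq, abs_lt]
    obtain ⟨h1, h2⟩ := hx
    constructor <;> linarith
  obtain ⟨ξ, hξmem, hξ⟩ := exists_hasDerivAt_eq_slope G φ hlt
    (fun x hx => ((hδsub (hsub x hx)).1).continuousAt.continuousWithinAt)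
    (fun x hx => (hδsub (hsub x (Ioo_subset_Icc_self hx))).1)
  rw [← hξ]
  exact (hδsub (hsub ξ (Ioo_subset_Icc_self hξmem))).2
end Q

section Prob
variable {Ω : Type*} [MeasurableSpace Ω] {P : Measure Ω} [IsProbabilityMeasure P]
  {U : ℕ → Ω → ℝ}

lemma slln_cnt (hUmeas : ∀ i, Measurable (U i))
    (hUlaw : ∀ i, Measure.map (U i) P = volume.restrict (Set.Icc (0:ℝ) 1))
    (hUindep : iIndepFun U P)
    {c : ℝ} (hc0 : 0 ≤ c) (hc1 : c ≤ 1) :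
    ∀ᵐ ω ∂P, Tendsto (fun n => (cntLe n U ω c : ℝ) / n) atTop (𝓝 c) := by
  set g : ℝ → ℝ := fun x => if x ≤ c then 1 else 0 with hg
  have hgmeas : Measurable g := Measurable.ite measurableSet_Iic measurable_const measurable_const
  set Y : ℕ → Ω → ℝ := fun i ω => g (U i ω) with hY
  have hYmeas : ∀ i, Measurable (Y i) := fun i => hgmeas.comp (hUmeas i)
  have hint : Integrable (Y 0) P := by
    refine Integrable.mono' (integrable_const 1) (hYmeas 0).aestronglyMeasurable ?_
    filter_upwards with ω
    by_cases h : U 0 ω ≤ c <;> simp [Y, g, h]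
  have hindep : Pairwise (Function.onFun (IndepFun · · P) Y) := fun i j hij =>
    (hUindep.indepFun hij).comp hgmeas hgmeas
  have hident : ∀ i, IdentDistrib (Y i) (Y 0) P P := fun i =>
    (IdentDistrib.comp ⟨(hUmeas i).aemeasurable, (hUmeas 0).aemeasurable,
      (hUlaw i).trans (hUlaw 0).symm⟩ hgmeas)
  have hgind : g = (Set.Iic c).indicator (fun _ => (1:ℝ)) := by
    funext x
    simp [hg, Set.indicator_apply, Set.mem_Iic]
  have hE : P[Y 0] = c := by
    calc P[Y 0] = ∫ y, g y ∂(Measure.map (U 0) P) :=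
          (integral_map (hUmeas 0).aemeasurable hgmeas.aestronglyMeasurable).symm
    _ = ∫ y, g y ∂(volume.restrict (Icc (0:ℝ) 1)) := by rw [hUlaw 0]
    _ = ((volume.restrict (Icc (0:ℝ) 1)) (Iic c)).toReal := by
          rw [hgind, integral_indicator_const _ measurableSet_Iic, smul_eq_mul, mul_one, measureReal_def]
    _ = (volume (Iic c ∩ Icc (0:ℝ) 1)).toReal := by
          rw [Measure.restrict_apply measurableSet_Iic]
    _ = (volume (Icc (0:ℝ) c)).toReal := by
          have hseteq : Iic c ∩ Icc (0:ℝ) 1 = Icc 0 c := by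
            ext x
            simp only [mem_inter_iff, mem_Iic, mem_Icc]
            constructor
            · rintro ⟨h1, h2, h3⟩; exact ⟨h2, h1⟩
            · rintro ⟨h1, h2⟩; exact ⟨h2, h1, h2.trans hc1⟩
          rw [hseteq]
    _ = c := by rw [Real.volume_Icc, ENNReal.toReal_ofReal (by linarith), sub_zero]
  have := strong_law_ae_real Y hint hindep hident
  rw [hE] at this
  filter_upwards [this] with ω hω
  refine hω.congr (fun n => ?_)
  rw [cntLe_cast_eq_sum]

lemma distinct_ae (hUmeas : ∀ i, Measurable (U i))
    (hUlaw : ∀ i, Measure.map (U i) P = volume.restrict (Set.Icc (0:ℝ) 1))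
    (hUindep : iIndepFun U P) :
    ∀ᵐ ω ∂P, ∀ i j : ℕ, i ≠ j → U i ω ≠ U j ω := by
  have pair : ∀ i j : ℕ, i ≠ j → ∀ᵐ ω ∂P, U i ω ≠ U j ω := by
    intro i j hij
    have hI : IndepFun (U i) (U j) P := hUindep.indepFun hij
    have hmap : Measure.map (fun ω => (U i ω, U j ω)) P =
        (volume.restrict (Icc (0:ℝ) 1)).prod (volume.restrict (Icc (0:ℝ) 1)) := by
      exact ((indepFun_iff_map_prod_eq_prod_map_map (hUmeas i).aemeasurable
        (hUmeas j).aemeasurable).mp hI).trans (by rw [hUlaw i, hUlaw j])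
    have hD : MeasurableSet {x : ℝ × ℝ | x.1 = x.2} :=
      measurableSet_eq_fun measurable_fst measurable_snd
    rw [ae_iff]
    have hset : {ω | ¬ U i ω ≠ U j ω} = (fun ω => (U i ω, U j ω)) ⁻¹' {x : ℝ×ℝ | x.1 = x.2} := by
      ext ω; simp
    rw [hset, ← Measure.map_apply ((hUmeas i).prodMk (hUmeas j)) hD, hmap,
      Measure.prod_apply hD]
    have hsec : ∀ x : ℝ, (volume.restrict (Icc (0:ℝ) 1)) (Prod.mk x ⁻¹' {p : ℝ×ℝ | p.1 = p.2}) = 0 := by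
      intro x
      have hx : (Prod.mk x ⁻¹' {p : ℝ×ℝ | p.1 = p.2}) = {x} := by ext y; simp [eq_comm]
      rw [hx]
      exact measure_singleton x
    simp only [hsec, lintegral_zero]
  rw [ae_all_iff]
  intro i
  rw [ae_all_iff]
  intro j
  by_cases hij : i = j
  · subst hij; filter_upwards with ω h; exact absurd rfl h
  · filter_upwards [pair i j hij] with ω h _; exact h

lemma orderStat_tendsto (hUmeas : ∀ i, Measurable (U i))
    (hUlaw : ∀ i, Measure.map (U i) P = volume.restrict (Set.Icc (0:ℝ) 1))
    (hUindep : iIndepFun U P)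
    {p : ℝ} (hp0 : 0 < p) (hp1 : p < 1) (m : ℕ → ℕ)
    (hm : Tendsto (fun n => (m n : ℝ)/n) atTop (𝓝 p)) :
    ∀ᵐ ω ∂P, Tendsto (fun n => orderStat n (m n) U ω) atTop (𝓝 p) := by
  set C := min p (1-p) with hC
  have hCpos : 0 < C := lt_min hp0 (by linarith)
  set ε : ℕ → ℝ := fun i => C / (i+2) with hε
  have hεpos : ∀ i, 0 < ε i := fun i => div_pos hCpos (by positivity)
  have hεltC : ∀ i, ε i < C := fun i => div_lt_self hCpos (by have := Nat.cast_nonneg (α := ℝ) i; linarith)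
  have hεp : ∀ i, ε i < p := fun i => lt_of_lt_of_le (hεltC i) (min_le_left _ _)
  have hε1p : ∀ i, ε i < 1 - p := fun i => lt_of_lt_of_le (hεltC i) (min_le_right _ _)
  have harch : ∀ d : ℝ, 0 < d → ∃ i : ℕ, ε i < d := by
    intro d hd
    obtain ⟨i, hi⟩ := exists_nat_gt (C / d)
    refine ⟨i, ?_⟩
    rw [div_lt_iff₀ (by positivity)]
    rw [div_lt_iff₀ hd] at hi
    nlinarith
  have H : ∀ᵐ ω ∂P, ∀ i : ℕ,
      Tendsto (fun n => (cntLe n U ω (p + ε i) : ℝ)/n) atTop (𝓝 (p + ε i)) ∧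
      Tendsto (fun n => (cntLe n U ω (p - ε i) : ℝ)/n) atTop (𝓝 (p - ε i)) := by
    rw [ae_all_iff]
    intro i
    exact (slln_cnt hUmeas hUlaw hUindep (by linarith [hεpos i]) (by linarith [hε1p i])).and
      (slln_cnt hUmeas hUlaw hUindep (by linarith [hεp i]) (by linarith [hεpos i]))
  filter_upwards [H] with ω hω
  rw [tendsto_order]
  have e0 : ∀ᶠ n : ℕ in atTop, 1 ≤ n := eventually_ge_atTop 1
  have e2 : ∀ᶠ n in atTop, (m n : ℝ)/n < (1+p)/2 := hm.eventually_lt_const (by linarith)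
  constructor
  · intro b hb
    obtain ⟨i, hi⟩ := harch (p - b) (by linarith)
    have hεi := hεpos i
    have e3 : ∀ᶠ n in atTop, (cntLe n U ω (p - ε i) : ℝ)/n < p - ε i/2 :=
      (hω i).2.eventually_lt_const (by linarith)
    have e4 : ∀ᶠ n in atTop, p - ε i/2 < (m n : ℝ)/n := hm.eventually_const_lt (by linarith)
    filter_upwards [e0, e2, e3, e4] with n h0 h2 h3 h4
    have hn0 : (0:ℝ) < n := by exact_mod_cast h0
    have hmn1 : 1 ≤ m n := by
      by_contra hc
      push_neg at hc
      have hmz : m n = 0 := by omega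
      rw [hmz] at h4
      simp at h4
      have := hεp i
      linarith
    have hmnn : m n ≤ n := by
      have : (m n : ℝ)/n < 1 := lt_of_lt_of_le h2 (by linarith)
      rw [div_lt_one hn0] at this
      exact_mod_cast this.le
    have hcnt : cntLe n U ω (p - ε i) < m n := by
      have := lt_trans h3 h4
      rw [div_lt_div_iff_of_pos_right hn0] at this
      exact_mod_cast this
    have hnot : ¬ (orderStat n (m n) U ω ≤ p - ε i) := by
      rw [orderStat_le_iff hmn1 hmnn]
      omega
    push_neg at hnot
    have hεib : ε i < p - b := hi
    linarith
  · intro b hb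
    obtain ⟨i, hi⟩ := harch (b - p) (by linarith)
    have hεi := hεpos i
    have e3 : ∀ᶠ n in atTop, p + ε i/2 < (cntLe n U ω (p + ε i) : ℝ)/n :=
      (hω i).1.eventually_const_lt (by linarith)
    have e4 : ∀ᶠ n in atTop, (m n : ℝ)/n < p + ε i/2 := hm.eventually_lt_const (by linarith)
    have e5 : ∀ᶠ n in atTop, p/2 < (m n : ℝ)/n := hm.eventually_const_lt (by linarith)
    filter_upwards [e0, e2, e3, e4, e5] with n h0 h2 h3 h4 h5
    have hn0 : (0:ℝ) < n := by exact_mod_cast h0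
    have hmn1 : 1 ≤ m n := by
      by_contra hc
      push_neg at hc
      have hmz : m n = 0 := by omega
      rw [hmz] at h5
      simp at h5
      linarith
    have hmnn : m n ≤ n := by
      have : (m n : ℝ)/n < 1 := lt_of_lt_of_le h2 (by linarith)
      rw [div_lt_one hn0] at this
      exact_mod_cast this.le
    have hcnt : m n ≤ cntLe n U ω (p + ε i) := by
      have := lt_trans h4 h3
      rw [div_lt_div_iff_of_pos_right hn0] at this
      have := this.le
      exact_mod_cast this
    have hle : orderStat n (m n) U ω ≤ p + ε i := (orderStat_le_iff hmn1 hmnn).mpr hcnt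
    linarith
end Prob

/-- **Almost sure convergence of the quantile-difference ratio at a central index.**
If `F` is the common continuous cdf of the i.i.d. sequence `X`, differentiable near
`x_p = F⁻¹(p)` with density `f` positive and continuous at `x_p`, `U` are i.i.d. Uniform(0,1),
and `k n / n → p`, then for every fixed integer `j` the ratio
`(F⁻¹(U_{k+j:n} + Δ_{k+j,n}) − F⁻¹(U_{k+j:n})) / Δ_{k+j,n}` converges a.s. to `1 / f(x_p)`. -/
theorem quantile_ratio_tendsto_ae
    {Ω : Type*} [MeasurableSpace Ω] (P : Measure Ω) [IsProbabilityMeasure P]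
    (μ : Measure ℝ) [IsProbabilityMeasure μ] (F f : ℝ → ℝ)
    (hF : ∀ x, F x = (μ (Set.Iic x)).toReal) (hFcont : Continuous F)
    (X : ℕ → Ω → ℝ) (hXmeas : ∀ i, Measurable (X i))
    (hXlaw : ∀ i, Measure.map (X i) P = μ)
    (hXindep : iIndepFun X P)
    (U : ℕ → Ω → ℝ) (hUmeas : ∀ i, Measurable (U i))
    (hUlaw : ∀ i, Measure.map (U i) P = volume.restrict (Set.Icc (0 : ℝ) 1))
    (hUindep : iIndepFun U P)
    (p : ℝ) (hp0 : 0 < p) (hp1 : p < 1)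
    (hderiv : ∀ᶠ x in 𝓝 (quantileFn F p), HasDerivAt F (f x) x)
    (hfcont : ContinuousAt f (quantileFn F p)) (hfpos : 0 < f (quantileFn F p))
    (k : ℕ → ℕ) (hk : Tendsto (fun n => (k n : ℝ) / n) atTop (𝓝 p)) (j : ℤ) :
    ∀ᵐ ω ∂P, Tendsto (fun n =>
        (quantileFn F (orderStat n ((k n : ℤ) + j).toNat U ω
              + (orderStat n ((k n : ℤ) + j + 1).toNat U ω
                - orderStat n ((k n : ℤ) + j).toNat U ω))
          - quantileFn F (orderStat n ((k n : ℤ) + j).toNat U ω))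
        / (orderStat n ((k n : ℤ) + j + 1).toNat U ω - orderStat n ((k n : ℤ) + j).toNat U ω))
      atTop (𝓝 (1 / f (quantileFn F p))) := by
  -- cdf facts
  have hFc : F = cdf μ := funext fun x => (hF x).trans (cdf_eq_real μ x).symm
  have hmono : Monotone F := hFc ▸ monotone_cdf (μ := μ)
  have hbot : Tendsto F atBot (𝓝 0) := hFc ▸ tendsto_cdf_atBot (μ := μ)
  have htop : Tendsto F atTop (𝓝 1) := hFc ▸ tendsto_cdf_atTop (μ := μ)
  -- quantile function differentiability
  have hG : ∀ᶠ q in 𝓝 p, HasDerivAt (quantileFn F) (f (quantileFn F q))⁻¹ q :=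
    quantile_hasDeriv hmono hFcont hbot htop hp0 hp1 hderiv hfcont hfpos
  have hGp : ContinuousAt (quantileFn F) p := hG.self_of_nhds.continuousAt
  have hφ : ContinuousAt (fun q => (f (quantileFn F q))⁻¹) p :=
    (hfcont.comp hGp).inv₀ (ne_of_gt hfpos)
  -- index sequences
  set m : ℕ → ℕ := fun n => ((k n : ℤ) + j).toNat with hmdef
  set m' : ℕ → ℕ := fun n => ((k n : ℤ) + j + 1).toNat with hm'def
  -- k n tends to infinity
  have hkR : Tendsto (fun n => ((k n : ℝ))) atTop atTop := by
    refine tendsto_atTop_mono' atTop ?_ (Tendsto.const_mul_atTop (half_pos hp0)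
      tendsto_natCast_atTop_atTop)
    have h1 := hk.eventually_const_lt (half_lt_self hp0)
    filter_upwards [h1, eventually_ge_atTop 1] with n hn hn1
    have hn0 : (0:ℝ) < n := by exact_mod_cast hn1
    have h2 := (lt_div_iff₀ hn0).mp hn
    linarith
  have hkbig : ∀ᶠ n in atTop, j.natAbs + 2 ≤ k n := by
    have := hkR.eventually_ge_atTop ((j.natAbs : ℝ) + 2)
    filter_upwards [this] with n hn
    exact_mod_cast hn
  -- convergence of m n / n and m' n / n
  have hjdiv : ∀ (c : ℤ), Tendsto (fun n : ℕ => ((c:ℝ))/n) atTop (𝓝 0) :=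
    fun c => tendsto_const_div_atTop_nhds_zero_nat (c:ℝ)
  have hmR : Tendsto (fun n => ((m n : ℝ))/n) atTop (𝓝 p) := by
    have base : Tendsto (fun n : ℕ => (k n : ℝ)/n + ((j:ℝ))/n) atTop (𝓝 (p + 0)) :=
      hk.add (hjdiv j)
    rw [add_zero] at base
    refine base.congr' ?_
    filter_upwards [hkbig] with n hn
    have h0 : ((m n : ℤ)) = (k n : ℤ) + j := by simp only [hmdef]; omega
    have : ((m n : ℝ)) = (k n : ℝ) + (j : ℝ) := by exact_mod_cast congrArg (fun z : ℤ => (z : ℝ)) h0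
    rw [this, add_div]
  have hm'R : Tendsto (fun n => ((m' n : ℝ))/n) atTop (𝓝 p) := by
    have base : Tendsto (fun n : ℕ => (k n : ℝ)/n + ((j+1:ℤ):ℝ)/n) atTop (𝓝 (p + 0)) :=
      hk.add (hjdiv (j+1))
    rw [add_zero] at base
    refine base.congr' ?_
    filter_upwards [hkbig] with n hn
    have h0 : ((m' n : ℤ)) = (k n : ℤ) + (j + 1) := by simp only [hm'def]; omega
    have : ((m' n : ℝ)) = (k n : ℝ) + ((j+1:ℤ) : ℝ) := by exact_mod_cast congrArg (fun z : ℤ => (z : ℝ)) h0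
    rw [this, add_div]
  -- almost sure events
  have hOS1 := orderStat_tendsto hUmeas hUlaw hUindep hp0 hp1 m hmR
  have hOS2 := orderStat_tendsto hUmeas hUlaw hUindep hp0 hp1 m' hm'R
  have hdist := distinct_ae hUmeas hUlaw hUindep
  filter_upwards [hOS1, hOS2, hdist] with ω h1 h2 hd
  set u : ℕ → ℝ := fun n => orderStat n (m n) U ω with hu
  set v : ℕ → ℝ := fun n => orderStat n (m' n) U ω with hv
  have hrw : ∀ a b : ℝ, a + (b - a) = b := fun a b => by ring
  have huv : ∀ᶠ n in atTop, u n < v n := by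
    have e1 : ∀ᶠ n in atTop, (m' n : ℝ)/n < 1 := hm'R.eventually_lt_const hp1
    filter_upwards [hkbig, e1, eventually_ge_atTop 1] with n hn he hn1
    have hn0 : (0:ℝ) < n := by exact_mod_cast hn1
    have hm'n : m' n ≤ n := by
      rw [div_lt_one hn0] at he
      exact_mod_cast he.le
    have hm1 : 1 ≤ m n := by simp only [hmdef]; omega
    have hm'eq : m' n = m n + 1 := by simp only [hmdef, hm'def]; omega
    show orderStat n (m n) U ω < orderStat n (m' n) U ω
    rw [hm'eq]
    exact orderStat_lt_succ hd hm1 (by omega)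
  have main := slope_tendsto hG hφ h1 h2 huv
  rw [show (1 : ℝ) / f (quantileFn F p) = (f (quantileFn F p))⁻¹ from one_div _]
  refine main.congr fun n => ?_
  show (quantileFn F (v n) - quantileFn F (u n)) / (v n - u n) =
    (quantileFn F (u n + (v n - u n)) - quantileFn F (u n)) / (v n - u n)
  rw [hrw]
end

section
/- Let F be a continuous cdf, 0 < p < 1, and suppose F is differentiable in a neighborhood of x_p = F^{-1}(p) with density f that is positive, finite and continuous at x_p. Then F^{-1} satisfies lim_{(p_1,h)→(p,0^+)} (F^{-1}(p_1+h) − F^{-1}(p_1)) / (F^{-1}(p+h) − F^{-1}(p)) = 1, i.e. for every ε > 0 there is δ > 0 such that |p_1 − p| < δ and 0 < h < δ imply the ratio is within ε of 1. -/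
open MeasureTheory ProbabilityTheory Filter Topology Set

/-- If `F` is monotone, continuous, attains values `≥ q` and `< q`, then `F (F⁻¹ q) = q`. -/
lemma quantile_apply_aux (F : ℝ → ℝ) (hmono : Monotone F) (hcont : Continuous F)
    (q : ℝ) (hne : ∃ x, q ≤ F x) (hbd : ∃ x, F x < q) :
    F (quantileFn F q) = q := by
  rw [show quantileFn F q = sInf {x | q ≤ F x} from rfl]
  have hSne : Set.Nonempty {x | q ≤ F x} := hne
  obtain ⟨x0, hx0⟩ := hbd
  have hlb : ∀ x ∈ {x | q ≤ F x}, x0 ≤ x := by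
    intro x hx
    by_contra hlt
    push_neg at hlt
    exact absurd (le_trans hx (hmono hlt.le)) (not_le.mpr hx0)
  have hbdd : BddBelow {x | q ≤ F x} := ⟨x0, hlb⟩
  have hclosed : IsClosed {x | q ≤ F x} := isClosed_Ici.preimage hcont
  have hmem : sInf {x | q ≤ F x} ∈ {x | q ≤ F x} := hclosed.csInf_mem hSne hbdd
  refine le_antisymm ?_ hmem
  by_contra hgt
  push_neg at hgt
  have hopen : IsOpen {x | q < F x} := isOpen_Ioi.preimage hcont
  obtain ⟨ε, hε, hball⟩ := Metric.isOpen_iff.mp hopen _ hgt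
  have hmem2 : sInf {x | q ≤ F x} - ε / 2 ∈ {x | q < F x} := by
    apply hball
    rw [Metric.mem_ball, Real.dist_eq, abs_of_nonpos (by linarith)]
    linarith
  have hmem3 : sInf {x | q ≤ F x} - ε / 2 ∈ {x | q ≤ F x} := by
    rw [Set.mem_setOf_eq] at hmem2 ⊢
    exact le_of_lt hmem2
  have := csInf_le hbdd hmem3
  linarith

set_option maxHeartbeats 1000000 in
/-- **Local regularity of the quantile function.**
If `F` is a continuous cdf, differentiable near `x_p = F⁻¹(p)` with density `f` positive and
continuous at `x_p`, then `lim_{(p₁,h)→(p,0⁺)} (F⁻¹(p₁+h) − F⁻¹(p₁))/(F⁻¹(p+h) − F⁻¹(p)) = 1`. -/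
theorem quantileFn_ratio_limit_one
    (μ : Measure ℝ) [IsProbabilityMeasure μ] (F f : ℝ → ℝ)
    (hF : ∀ x, F x = (μ (Set.Iic x)).toReal) (hFcont : Continuous F)
    (p : ℝ) (hp0 : 0 < p) (hp1 : p < 1)
    (hderiv : ∀ᶠ x in 𝓝 (quantileFn F p), HasDerivAt F (f x) x)
    (hfcont : ContinuousAt f (quantileFn F p)) (hfpos : 0 < f (quantileFn F p)) :
    ∀ ε > 0, ∃ δ > 0, ∀ p₁ h : ℝ, |p₁ - p| < δ → 0 < h → h < δ →
      |(quantileFn F (p₁ + h) - quantileFn F p₁)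
        / (quantileFn F (p + h) - quantileFn F p) - 1| < ε := by
  intro ε hε
  set xp := quantileFn F p with hxp
  set c := f xp with hcdef
  have hc : 0 < c := hfpos
  have hFcdf : F = cdf μ := by funext x; rw [hF x, cdf_eq_real, measureReal_def]
  have hmono : Monotone F := by rw [hFcdf]; exact monotone_cdf μ
  -- choose η
  set η := min (c / 2) (ε * c / 5) with hηdef
  have hηpos : 0 < η := lt_min (by positivity) (by positivity)
  have hη1 : η ≤ c / 2 := min_le_left _ _
  have hη2 : η ≤ ε * c / 5 := min_le_right _ _
  -- a radius where the derivative exists and f is η-close to c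
  have hnear : ∀ᶠ x in 𝓝 xp, HasDerivAt F (f x) x ∧ |f x - c| < η := by
    refine hderiv.and ?_
    have := Metric.tendsto_nhds.mp hfcont η hηpos
    simpa [Real.dist_eq] using this
  obtain ⟨r, hr0, hr⟩ := Metric.eventually_nhds_iff.mp hnear
  have fpos : ∀ x : ℝ, dist x xp < r → c / 2 < f x := by
    intro x hx
    have h2 := (hr hx).2
    rw [abs_lt] at h2
    linarith [h2.1]
  -- strict monotonicity on the interval
  have hsm : StrictMonoOn F (Ioo (xp - r) (xp + r)) := by
    refine strictMonoOn_of_deriv_pos (convex_Ioo _ _) hFcont.continuousOn ?_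
    intro x hx
    rw [interior_Ioo, mem_Ioo] at hx
    have hd : dist x xp < r := by rw [Real.dist_eq, abs_lt]; constructor <;> linarith
    rw [(hr hd).1.deriv]
    linarith [fpos x hd]
  -- F xp = p
  have hFxp : F xp = p := by
    refine quantile_apply_aux F hmono hFcont p ?_ ?_
    · have h := tendsto_cdf_atTop μ
      rw [← hFcdf] at h
      exact (h.eventually (eventually_ge_nhds hp1)).exists
    · have h := tendsto_cdf_atBot μ
      rw [← hFcdf] at h
      exact (h.eventually (eventually_lt_nhds hp0)).exists
  have hm1 : xp - r / 2 ∈ Ioo (xp - r) (xp + r) := by rw [mem_Ioo]; constructor <;> linarith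
  have hm2 : xp ∈ Ioo (xp - r) (xp + r) := by rw [mem_Ioo]; constructor <;> linarith
  have hm3 : xp + r / 2 ∈ Ioo (xp - r) (xp + r) := by rw [mem_Ioo]; constructor <;> linarith
  set a := F (xp - r / 2) with hadef
  set b := F (xp + r / 2) with hbdef
  have ha : a < p := by rw [← hFxp]; exact hsm hm1 hm2 (by linarith)
  have hb : p < b := by rw [← hFxp]; exact hsm hm2 hm3 (by linarith)
  -- quantile identity and localization on (a, b)
  have hQ : ∀ q : ℝ, a < q → q < b →
      F (quantileFn F q) = q ∧ quantileFn F q ∈ Icc (xp - r / 2) (xp + r / 2) := by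
    intro q h1 h2
    have hFq := quantile_apply_aux F hmono hFcont q ⟨xp + r / 2, h2.le⟩ ⟨xp - r / 2, h1⟩
    have hlb : ∀ x ∈ {x | q ≤ F x}, xp - r / 2 ≤ x := by
      intro x hx
      by_contra hlt
      push_neg at hlt
      exact absurd (le_trans hx (hmono hlt.le)) (not_le.mpr h1)
    refine ⟨hFq, ?_, ?_⟩
    · exact le_csInf ⟨xp + r / 2, h2.le⟩ hlb
    · exact csInf_le ⟨xp - r / 2, hlb⟩ h2.le
  -- mean value theorem step
  have hMVT : ∀ q h' : ℝ, a < q → q + h' < b → 0 < h' →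
      ∃ ξ : ℝ, dist ξ xp < r ∧ quantileFn F (q + h') - quantileFn F q = h' / f ξ := by
    intro q h' h1 h2 h0
    obtain ⟨hFu, hu1, hu2⟩ := hQ q h1 (by linarith)
    obtain ⟨hFv, hv1, hv2⟩ := hQ (q + h') (by linarith) h2
    set u := quantileFn F q
    set v := quantileFn F (q + h')
    have huv : u < v := by
      rcases lt_or_ge u v with h | h
      · exact h
      · have := hmono h
        rw [hFu, hFv] at this
        linarith
    have hdist : ∀ x ∈ Icc u v, dist x xp < r := by
      intro x hx
      rw [Real.dist_eq, abs_lt]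
      obtain ⟨hx1, hx2⟩ := hx
      constructor <;> linarith
    obtain ⟨ξ, hξ, hslope⟩ := exists_hasDerivAt_eq_slope F f huv
      hFcont.continuousOn (fun x hx => (hr (hdist x (Ioo_subset_Icc_self hx))).1)
    have hξd : dist ξ xp < r := hdist ξ (Ioo_subset_Icc_self hξ)
    refine ⟨ξ, hξd, ?_⟩
    rw [hFv, hFu] at hslope
    have hfξ : 0 < f ξ := lt_trans (by positivity) (fpos ξ hξd)
    rw [eq_div_iff (sub_ne_zero.mpr huv.ne')] at hslope
    rw [eq_div_iff hfξ.ne']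
    nlinarith [hslope]
  -- choose δ
  have hδpos : 0 < min (p - a) (b - p) / 2 := by
    have := lt_min (show (0:ℝ) < p - a by linarith) (show (0:ℝ) < b - p by linarith)
    linarith
  refine ⟨min (p - a) (b - p) / 2, hδpos, ?_⟩
  intro p₁ h hp₁ hh0 hhδ
  rw [abs_lt] at hp₁
  have hδa : min (p - a) (b - p) / 2 ≤ (p - a) / 2 := by
    have := min_le_left (p - a) (b - p); linarith
  have hδb : min (p - a) (b - p) / 2 ≤ (b - p) / 2 := by
    have := min_le_right (p - a) (b - p); linarith
  obtain ⟨ξ₁, hd₁, he₁⟩ := hMVT p₁ h (by linarith) (by linarith) hh0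
  obtain ⟨ξ₂, hd₂, he₂⟩ := hMVT p h (by linarith) (by linarith) hh0
  rw [he₁, he₂]
  have hf₁ : c / 2 < f ξ₁ := fpos ξ₁ hd₁
  have hf₂ : c / 2 < f ξ₂ := fpos ξ₂ hd₂
  have hf₁0 : 0 < f ξ₁ := by linarith
  have hf₂0 : 0 < f ξ₂ := by linarith
  have he : h / f ξ₁ / (h / f ξ₂) = f ξ₂ / f ξ₁ := by
    field_simp
  rw [he]
  have hn₁ : |f ξ₁ - c| < η := (hr hd₁).2
  have hn₂ : |f ξ₂ - c| < η := (hr hd₂).2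
  rw [abs_lt] at hn₁ hn₂
  have habs : |f ξ₂ - f ξ₁| < 2 * η := by
    rw [abs_lt]; constructor <;> linarith
  have heq2 : f ξ₂ / f ξ₁ - 1 = (f ξ₂ - f ξ₁) / f ξ₁ := by field_simp
  rw [heq2, abs_div, abs_of_pos hf₁0, div_lt_iff₀ hf₁0]
  nlinarith [habs, hη2, hf₁, hc, hε]
end

section
/- Let X_1, ..., X_n be i.i.d. real random variables with continuous cdf F, let 1 ≤ k ≤ n, d > 0, and define the count statistics K_−(n,k,d) = #{j ≤ n : X_j ∈ (X_{k:n} − d, X_{k:n})} and K_+(n,k,d) = #{j ≤ n : X_j ∈ (X_{k:n}, X_{k:n} + d)}. Then for all positive integers i ≤ k−1 and j ≤ n−k, P(K_−(n,k,d) < i) = P(X_{k:n} − X_{k−i:n} > d) and P(K_+(n,k,d) < j) = P(X_{k+j:n} − X_{k:n} > d). -/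
open MeasureTheory ProbabilityTheory Filter Topology Set

/-- `K₋(n,k,d)`: the number of sample points among `X 0, …, X (n−1)` lying in the open
interval `(X_{k:n} − d, X_{k:n})`. -/
noncomputable def countLeft {Ω : Type*} (n k : ℕ) (d : ℝ) (X : ℕ → Ω → ℝ) (ω : Ω) : ℕ :=
  ((Finset.range n).filter
    (fun l => orderStat n k X ω - d < X l ω ∧ X l ω < orderStat n k X ω)).card

/-- `K₊(n,k,d)`: the number of sample points among `X 0, …, X (n−1)` lying in the open
interval `(X_{k:n}, X_{k:n} + d)`. -/
noncomputable def countRight {Ω : Type*} (n k : ℕ) (d : ℝ) (X : ℕ → Ω → ℝ) (ω : Ω) : ℕ :=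
  ((Finset.range n).filter
    (fun l => orderStat n k X ω < X l ω ∧ X l ω < orderStat n k X ω + d)).card

/- ### Auxiliary lemmas -/

lemma aux_count_lt_iff_left {S : List ℝ} (hS : List.Pairwise (· < ·) S) {n k i : ℕ}
    (hlen : S.length = n) (hk1 : 1 ≤ k) (hkn : k ≤ n) (hi1 : 1 ≤ i) (hik : i ≤ k - 1)
    (d : ℝ) :
    (((Finset.range n).filter
      (fun m => S.getD (k-1) 0 - d < S.getD m 0 ∧ S.getD m 0 < S.getD (k-1) 0)).card < i
      ↔ d ≤ S.getD (k-1) 0 - S.getD (k-1-i) 0) := by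
  have hmono : ∀ a b : ℕ, a < b → b < n → S.getD a 0 < S.getD b 0 := by
    intro a b hab hbn
    have ha : a < S.length := by omega
    have hb : b < S.length := by omega
    rw [List.getD_eq_getElem _ _ ha, List.getD_eq_getElem _ _ hb]
    exact List.pairwise_iff_getElem.1 hS a b ha hb hab
  have hmono' : ∀ a b : ℕ, a ≤ b → b < n → S.getD a 0 ≤ S.getD b 0 := by
    intro a b hab hbn
    rcases eq_or_lt_of_le hab with h | h
    · simp [h]
    · exact (hmono a b h hbn).le
  constructor
  · intro hcard
    by_contra hcon
    push_neg at hcon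
    have hsub : Finset.Ico (k-1-i) (k-1) ⊆ (Finset.range n).filter
        (fun m => S.getD (k-1) 0 - d < S.getD m 0 ∧ S.getD m 0 < S.getD (k-1) 0) := by
      intro m hm
      simp only [Finset.mem_Ico] at hm
      refine Finset.mem_filter.2 ⟨Finset.mem_range.2 (by omega), ?_, ?_⟩
      · calc S.getD (k-1) 0 - d < S.getD (k-1-i) 0 := by linarith
          _ ≤ S.getD m 0 := hmono' _ _ hm.1 (by omega)
      · exact hmono m (k-1) hm.2 (by omega)
    have := Finset.card_le_card hsub
    rw [Nat.card_Ico] at this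
    omega
  · intro hle
    have hsub : (Finset.range n).filter
        (fun m => S.getD (k-1) 0 - d < S.getD m 0 ∧ S.getD m 0 < S.getD (k-1) 0)
        ⊆ Finset.Ioo (k-1-i) (k-1) := by
      intro m hm
      simp only [Finset.mem_filter, Finset.mem_range] at hm
      obtain ⟨hmn, h1, h2⟩ := hm
      refine Finset.mem_Ioo.2 ⟨?_, ?_⟩
      · by_contra h
        push_neg at h
        have := hmono' m (k-1-i) h (by omega)
        linarith
      · by_contra h
        push_neg at h
        have := hmono' (k-1) m h hmn
        linarith
    have := Finset.card_le_card hsub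
    rw [Nat.card_Ioo] at this
    omega

lemma aux_count_lt_iff_right {S : List ℝ} (hS : List.Pairwise (· < ·) S) {n k j : ℕ}
    (hlen : S.length = n) (hk1 : 1 ≤ k) (hkn : k ≤ n) (hj1 : 1 ≤ j) (hjk : j ≤ n - k)
    (d : ℝ) :
    (((Finset.range n).filter
      (fun m => S.getD (k-1) 0 < S.getD m 0 ∧ S.getD m 0 < S.getD (k-1) 0 + d)).card < j
      ↔ d ≤ S.getD (k-1+j) 0 - S.getD (k-1) 0) := by
  have hmono : ∀ a b : ℕ, a < b → b < n → S.getD a 0 < S.getD b 0 := by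
    intro a b hab hbn
    have ha : a < S.length := by omega
    have hb : b < S.length := by omega
    rw [List.getD_eq_getElem _ _ ha, List.getD_eq_getElem _ _ hb]
    exact List.pairwise_iff_getElem.1 hS a b ha hb hab
  have hmono' : ∀ a b : ℕ, a ≤ b → b < n → S.getD a 0 ≤ S.getD b 0 := by
    intro a b hab hbn
    rcases eq_or_lt_of_le hab with h | h
    · simp [h]
    · exact (hmono a b h hbn).le
  constructor
  · intro hcard
    by_contra hcon
    push_neg at hcon
    have hsub : Finset.Ioc (k-1) (k-1+j) ⊆ (Finset.range n).filter
        (fun m => S.getD (k-1) 0 < S.getD m 0 ∧ S.getD m 0 < S.getD (k-1) 0 + d) := by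
      intro m hm
      simp only [Finset.mem_Ioc] at hm
      refine Finset.mem_filter.2 ⟨Finset.mem_range.2 (by omega), ?_, ?_⟩
      · exact hmono (k-1) m hm.1 (by omega)
      · calc S.getD m 0 ≤ S.getD (k-1+j) 0 := hmono' _ _ hm.2 (by omega)
          _ < S.getD (k-1) 0 + d := by linarith
    have := Finset.card_le_card hsub
    rw [Nat.card_Ioc] at this
    omega
  · intro hle
    have hsub : (Finset.range n).filter
        (fun m => S.getD (k-1) 0 < S.getD m 0 ∧ S.getD m 0 < S.getD (k-1) 0 + d)
        ⊆ Finset.Ioo (k-1) (k-1+j) := by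
      intro m hm
      simp only [Finset.mem_filter, Finset.mem_range] at hm
      obtain ⟨hmn, h1, h2⟩ := hm
      refine Finset.mem_Ioo.2 ⟨?_, ?_⟩
      · by_contra h
        push_neg at h
        have := hmono' m (k-1) h (by omega)
        linarith
      · by_contra h
        push_neg at h
        have := hmono' (k-1+j) m h hmn
        linarith
    have := Finset.card_le_card hsub
    rw [Nat.card_Ioo] at this
    omega

lemma aux_map_getD_range {S : List ℝ} {n : ℕ} (hlen : S.length = n) :
    (List.range n).map (fun m => S.getD m 0) = S := by
  subst hlen
  apply List.ext_getElem
  · simp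
  · intro m h1 h2
    simp only [List.getElem_map, List.getElem_range]
    exact List.getD_eq_getElem _ _ h2

lemma aux_card_filter_eq_countP (Q : ℝ → Prop) [DecidablePred Q] (g : ℕ → ℝ) (n : ℕ) :
    ((Finset.range n).filter (fun l => Q (g l))).card
      = List.countP (fun x => decide (Q x)) ((List.range n).map g) := by
  rw [List.countP_map]
  have h1 : ((Finset.range n).filter (fun l => Q (g l))).card
      = Multiset.countP (fun l => Q (g l)) (Finset.range n).val := by
    rw [Multiset.countP_eq_card_filter]; rfl
  rw [h1, Finset.range_val, Multiset.range]
  exact Multiset.coe_countP _ _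

lemma aux_card_filter_transfer {f : ℕ → ℝ} {n : ℕ} {S : List ℝ}
    (hperm : S.Perm ((List.range n).map f)) (hlen : S.length = n)
    (Q : ℝ → Prop) [DecidablePred Q] :
    ((Finset.range n).filter (fun l => Q (f l))).card
      = ((Finset.range n).filter (fun m => Q (S.getD m 0))).card := by
  rw [aux_card_filter_eq_countP Q f n, aux_card_filter_eq_countP Q (fun m => S.getD m 0) n,
    aux_map_getD_range hlen]
  exact (hperm.countP_eq _).symm

lemma aux_atomless_of_cdf_cont (μ : Measure ℝ) [IsProbabilityMeasure μ] (F : ℝ → ℝ)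
    (hF : ∀ x, F x = (μ (Set.Iic x)).toReal) (hFcont : Continuous F) (x : ℝ) :
    μ {x} = 0 := by
  have hIic : ∀ y, μ (Set.Iic y) = ENNReal.ofReal (F y) := by
    intro y
    rw [hF y, ENNReal.ofReal_toReal (measure_ne_top μ _)]
  have hmono : Monotone (fun m : ℕ => Set.Iic (x - 1/(m+1))) := by
    intro a b hab
    apply Set.Iic_subset_Iic.2
    have : (1:ℝ)/(b+1) ≤ 1/(a+1) := by
      apply one_div_le_one_div_of_le <;> [positivity; exact_mod_cast by omega]
    linarith
  have hunion : (⋃ m : ℕ, Set.Iic (x - 1/(m+1))) = Set.Iio x := by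
    ext y
    simp only [Set.mem_iUnion, Set.mem_Iic, Set.mem_Iio]
    constructor
    · rintro ⟨m, hm⟩
      have : (0:ℝ) < 1/(m+1) := by positivity
      linarith
    · intro hy
      obtain ⟨m, hm⟩ := exists_nat_one_div_lt (show (0:ℝ) < x - y by linarith)
      exact ⟨m, by linarith⟩
  have htend := tendsto_measure_iUnion_atTop (μ := μ) hmono
  rw [hunion] at htend
  have harg : Tendsto (fun m : ℕ => x - 1/(m+1)) atTop (𝓝 x) := by
    have := tendsto_one_div_add_atTop_nhds_zero_nat (𝕜 := ℝ)
    have h2 := (tendsto_const_nhds (x := x) (f := atTop (α := ℕ))).sub this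
    simpa using h2
  have htend2 : Tendsto (fun m : ℕ => μ (Set.Iic (x - 1/(m+1)))) atTop
      (𝓝 (ENNReal.ofReal (F x))) := by
    simp only [hIic]
    exact (ENNReal.continuous_ofReal.tendsto _).comp ((hFcont.tendsto x).comp harg)
  have hIio : μ (Set.Iio x) = ENNReal.ofReal (F x) := tendsto_nhds_unique htend htend2
  have hsplit : μ (Set.Iio x) + μ {x} = μ (Set.Iic x) := by
    rw [← measure_union (by simp only [Set.disjoint_left, Set.mem_Iio,
        Set.mem_singleton_iff]; intro a ha; exact ne_of_lt ha) (measurableSet_singleton x)]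
    congr 1
    ext y
    simp [le_iff_lt_or_eq]
  rw [hIio, hIic] at hsplit
  have : ENNReal.ofReal (F x) + μ {x} = ENNReal.ofReal (F x) + 0 := by simpa using hsplit
  exact (ENNReal.add_right_inj ENNReal.ofReal_ne_top).1 this |>.symm ▸ rfl

lemma aux_prob_shift_zero {Ω : Type*} [MeasurableSpace Ω] (P : Measure Ω)
    [IsProbabilityMeasure P]
    (μ : Measure ℝ) [IsProbabilityMeasure μ] (hatom : ∀ x : ℝ, μ {x} = 0)
    (f g : Ω → ℝ) (hf : Measurable f) (hg : Measurable g)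
    (hfl : Measure.map f P = μ) (hgl : Measure.map g P = μ)
    (hind : IndepFun f g P) (c : ℝ) :
    P {ω | f ω = g ω + c} = 0 := by
  have hs : MeasurableSet {p : ℝ × ℝ | p.1 = p.2 + c} := by
    have : {p : ℝ × ℝ | p.1 = p.2 + c} = (fun p : ℝ × ℝ => p.1 - p.2) ⁻¹' {c} := by
      ext p
      simp only [Set.mem_setOf_eq, Set.mem_preimage, Set.mem_singleton_iff, sub_eq_iff_eq_add]
      constructor <;> intro h <;> linarith
    rw [this]
    exact (measurable_fst.sub measurable_snd) (measurableSet_singleton c)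
  have hmap : Measure.map (fun ω => (f ω, g ω)) P = μ.prod μ := by
    rw [(indepFun_iff_map_prod_eq_prod_map_map hf.aemeasurable hg.aemeasurable).1 hind,
      hfl, hgl]
  have : P {ω | f ω = g ω + c}
      = Measure.map (fun ω => (f ω, g ω)) P {p : ℝ × ℝ | p.1 = p.2 + c} := by
    rw [Measure.map_apply (hf.prodMk hg) hs]
    rfl
  rw [this, hmap, Measure.prod_apply hs]
  have hslice : ∀ x : ℝ, (Prod.mk x ⁻¹' {p : ℝ × ℝ | p.1 = p.2 + c}) = {x - c} := by
    intro x
    ext y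
    simp only [Set.mem_preimage, Set.mem_setOf_eq, Set.mem_singleton_iff]
    constructor <;> intro h <;> linarith
  simp only [hslice, hatom]
  simp

/-- **Exact duality between neighborhood counts and spacings.**
For i.i.d. observations with continuous cdf `F`, `P(K₋(n,k,d) < i) = P(X_{k:n} − X_{k−i:n} > d)`
and `P(K₊(n,k,d) < j) = P(X_{k+j:n} − X_{k:n} > d)` for `1 ≤ i ≤ k−1` and `1 ≤ j ≤ n−k`. -/
theorem count_spacing_duality
    {Ω : Type*} [MeasurableSpace Ω] (P : Measure Ω) [IsProbabilityMeasure P]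
    (μ : Measure ℝ) [IsProbabilityMeasure μ] (F : ℝ → ℝ)
    (hF : ∀ x, F x = (μ (Set.Iic x)).toReal) (hFcont : Continuous F)
    (X : ℕ → Ω → ℝ) (hXmeas : ∀ i, Measurable (X i))
    (hXlaw : ∀ i, Measure.map (X i) P = μ)
    (hXindep : iIndepFun X P)
    (n k : ℕ) (hk1 : 1 ≤ k) (hkn : k ≤ n) (d : ℝ) (hd : 0 < d) :
    (∀ i : ℕ, 1 ≤ i → i ≤ k - 1 →
      P {ω | countLeft n k d X ω < i}
        = P {ω | orderStat n k X ω - orderStat n (k - i) X ω > d}) ∧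
    (∀ j : ℕ, 1 ≤ j → j ≤ n - k →
      P {ω | countRight n k d X ω < j}
        = P {ω | orderStat n (k + j) X ω - orderStat n k X ω > d}) := by
  classical
  have hatom : ∀ x : ℝ, μ {x} = 0 := aux_atomless_of_cdf_cont μ F hF hFcont
  -- the good event
  set G : Set Ω := {ω | ∀ a b : ℕ, a ≠ b →
      X a ω ≠ X b ω ∧ X a ω ≠ X b ω + d} with hG
  have hGc : P Gᶜ = 0 := by
    have hsub : Gᶜ ⊆ ⋃ a : ℕ, ⋃ b : ℕ,
        {ω | a ≠ b ∧ (X a ω = X b ω ∨ X a ω = X b ω + d)} := by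
      intro ω hω
      simp only [hG, Set.mem_compl_iff, Set.mem_setOf_eq] at hω
      push_neg at hω
      obtain ⟨a, b, hab, h⟩ := hω
      simp only [Set.mem_iUnion, Set.mem_setOf_eq]
      refine ⟨a, b, hab, ?_⟩
      by_cases h1 : X a ω = X b ω
      · exact Or.inl h1
      · exact Or.inr (h h1)
    refine measure_mono_null hsub (measure_iUnion_null fun a => measure_iUnion_null fun b => ?_)
    by_cases hab : a = b
    · have : {ω | a ≠ b ∧ (X a ω = X b ω ∨ X a ω = X b ω + d)} = ∅ := by
        ext ω; simp [hab]
      simp [this]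
    · have hind : IndepFun (X a) (X b) P := hXindep.indepFun hab
      have h0 : P {ω | X a ω = X b ω + 0} = 0 :=
        aux_prob_shift_zero P μ hatom (X a) (X b) (hXmeas a) (hXmeas b)
          (hXlaw a) (hXlaw b) hind 0
      have hdz : P {ω | X a ω = X b ω + d} = 0 :=
        aux_prob_shift_zero P μ hatom (X a) (X b) (hXmeas a) (hXmeas b)
          (hXlaw a) (hXlaw b) hind d
      have hsub2 : {ω | a ≠ b ∧ (X a ω = X b ω ∨ X a ω = X b ω + d)}
          ⊆ {ω | X a ω = X b ω + 0} ∪ {ω | X a ω = X b ω + d} := by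
        intro ω hω
        rcases hω.2 with h | h
        · exact Or.inl (by simpa using h)
        · exact Or.inr h
      exact measure_mono_null hsub2 (measure_union_null h0 hdz)
  -- pointwise structure on the good event
  have hkey : ∀ ω ∈ G,
      (∀ i : ℕ, 1 ≤ i → i ≤ k - 1 →
        (countLeft n k d X ω < i ↔ orderStat n k X ω - orderStat n (k - i) X ω > d)) ∧
      (∀ j : ℕ, 1 ≤ j → j ≤ n - k →
        (countRight n k d X ω < j ↔ orderStat n (k + j) X ω - orderStat n k X ω > d)) := by
    intro ω hω
    simp only [hG, Set.mem_setOf_eq] at hω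
    set f : ℕ → ℝ := fun l => X l ω with hf
    set L : List ℝ := (List.range n).map f with hL
    set S : List ℝ := L.insertionSort (· ≤ ·) with hS
    have hlen : S.length = n := by
      rw [hS, List.length_insertionSort, hL, List.length_map, List.length_range]
    have hperm : S.Perm L := List.perm_insertionSort _ _
    have hsorted : S.Pairwise (· ≤ ·) := List.pairwise_insertionSort _ _
    have hnodupL : L.Nodup := by
      rw [hL]
      refine (List.nodup_range (n := n)).map_on ?_
      intro x _ y _ hxy
      by_contra hne
      exact ((hω x y hne).1) hxy
    have hnodupS : S.Nodup := hperm.nodup_iff.2 hnodupL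
    have hSlt : S.Pairwise (· < ·) := (hsorted.and hnodupS).imp fun h => lt_of_le_of_ne h.1 h.2
    have hord : ∀ m : ℕ, orderStat n m X ω = S.getD (m-1) 0 := fun m => rfl
    have hmem : ∀ m : ℕ, m < n → ∃ a : ℕ, a < n ∧ X a ω = S.getD m 0 := by
      intro m hm
      have hm' : m < S.length := by omega
      have : S.getD m 0 ∈ S := by
        rw [List.getD_eq_getElem _ _ hm']
        exact List.getElem_mem _
      rw [hperm.mem_iff, hL, List.mem_map] at this
      obtain ⟨a, ha, hae⟩ := this
      exact ⟨a, List.mem_range.1 ha, hae⟩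
    have hne_d : ∀ p q : ℕ, p < n → q < n → S.getD p 0 ≠ S.getD q 0 + d := by
      intro p q hp hq heq
      obtain ⟨a, ha, hae⟩ := hmem p hp
      obtain ⟨b, hb, hbe⟩ := hmem q hq
      rcases eq_or_ne a b with rfl | hab
      · have h2 : S.getD p 0 = S.getD q 0 := by rw [← hae, ← hbe]
        rw [h2] at heq; linarith
      · exact (hω a b hab).2 (by rw [hae, hbe]; exact heq)
    constructor
    · intro i hi1 hik
      have hC : countLeft n k d X ω
          = ((Finset.range n).filter
            (fun m => S.getD (k-1) 0 - d < S.getD m 0 ∧ S.getD m 0 < S.getD (k-1) 0)).card := by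
        rw [countLeft]
        have := aux_card_filter_transfer (f := f) (n := n) (S := S) hperm hlen
          (fun x => S.getD (k-1) 0 - d < x ∧ x < S.getD (k-1) 0)
        simp only [hord] at *
        convert this using 2
      rw [hC]
      rw [aux_count_lt_iff_left hSlt hlen hk1 hkn hi1 hik d]
      have hidx : orderStat n (k - i) X ω = S.getD (k-1-i) 0 := by
        rw [hord]; congr 1; omega
      rw [hord k, hidx]
      constructor
      · intro hle
        rcases lt_or_eq_of_le hle with h | h
        · exact h
        · exfalso
          exact hne_d (k-1) (k-1-i) (by omega) (by omega) (by linarith)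
      · intro h; exact h.le
    · intro j hj1 hjk
      have hC : countRight n k d X ω
          = ((Finset.range n).filter
            (fun m => S.getD (k-1) 0 < S.getD m 0 ∧ S.getD m 0 < S.getD (k-1) 0 + d)).card := by
        rw [countRight]
        have := aux_card_filter_transfer (f := f) (n := n) (S := S) hperm hlen
          (fun x => S.getD (k-1) 0 < x ∧ x < S.getD (k-1) 0 + d)
        simp only [hord] at *
        convert this using 2
      rw [hC]
      rw [aux_count_lt_iff_right hSlt hlen hk1 hkn hj1 hjk d]
      have hidx : orderStat n (k + j) X ω = S.getD (k-1+j) 0 := by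
        rw [hord]; congr 1; omega
      rw [hord k, hidx]
      constructor
      · intro hle
        rcases lt_or_eq_of_le hle with h | h
        · exact h
        · exfalso
          exact hne_d (k-1+j) (k-1) (by omega) (by omega) (by linarith)
      · intro h; exact h.le
  -- from pointwise equivalence off a null set to equality of measures
  have hmc : ∀ (s t : Set Ω), (∀ ω ∈ G, (ω ∈ s ↔ ω ∈ t)) → P s = P t := by
    intro s t hst
    apply measure_congr
    rw [Filter.eventuallyEq_set]
    filter_upwards [measure_eq_zero_iff_ae_notMem.1 hGc] with ω hω
    have : ω ∈ G := by
      by_contra h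
      exact hω h
    exact hst ω this
  constructor
  · intro i hi1 hik
    exact hmc _ _ fun ω hω => (hkey ω hω).1 i hi1 hik
  · intro j hj1 hjk
    exact hmc _ _ fun ω hω => (hkey ω hω).2 j hj1 hjk
end
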